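/- arXiv:1912.06978 — 2 statements merged into one kernel-verified Lean document; each statement's English description precedes it below -/
import Mathlib

section
/- Let X ⊆ ℝⁿ be a nonempty compact convex polytope given as the intersection of m closed half-spaces, X = ⋂_{i=1}^{m} {x ∈ ℝⁿ : ⟨aᵢ, x⟩ ≤ bᵢ}, where each aᵢ ∈ ℝⁿ is nonzero and bᵢ ∈ ℝ. Then there exist zonotopes Z₁, …, Z_m ⊆ ℝⁿ (at most m of them) such that X = ⋂_{i=1}^{m} Zᵢ; i.e., X can be exactly represented as the intersection of at most m zonotopic sets. -/
open scoped RealInnerProductSpace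

/-- A zonotope in `ℝⁿ`: a set of the form
`{p + ∑ i, s i • g i : s ∈ ℝᵏ, |s i| ≤ 1 for all i}`
for some center `p` and finitely many generators `g i`. -/
def IsZonotope {n : ℕ} (Z : Set (EuclideanSpace ℝ (Fin n))) : Prop :=
  ∃ (k : ℕ) (p : EuclideanSpace ℝ (Fin n)) (g : Fin k → EuclideanSpace ℝ (Fin n)),
    Z = {x | ∃ s : Fin k → ℝ, (∀ i, |s i| ≤ 1) ∧ x = p + ∑ i, s i • g i}

/-!
Since `X` is bounded, it lies in a large cube `|⟪eⱼ, x⟫| ≤ R` for an orthonormal basis `(eⱼ)` that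
contains `aᵢ / ‖aᵢ‖`. Cutting that cube down by the face `⟪aᵢ, x⟫ ≤ bᵢ` gives a box, which is a
zonotope `Zᵢ` with `X ⊆ Zᵢ ⊆ {x | ⟪aᵢ, x⟫ ≤ bᵢ}`; intersecting over `i` gives `X = ⋂ Zᵢ`.
-/

section

variable {n : ℕ}

theorem isZonotope_of_fintype {ι : Type*} [Fintype ι] (p : EuclideanSpace ℝ (Fin n))
    (g : ι → EuclideanSpace ℝ (Fin n)) :
    IsZonotope {x | ∃ s : ι → ℝ, (∀ i, |s i| ≤ 1) ∧ x = p + ∑ i, s i • g i} := by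
  let e := Fintype.equivFin ι
  refine ⟨Fintype.card ι, p, g ∘ e.symm, Set.ext fun x => ⟨?_, ?_⟩⟩
  · rintro ⟨s, hs, rfl⟩
    exact ⟨s ∘ e.symm, fun k => hs _, by rw [← e.symm.sum_comp]; rfl⟩
  · rintro ⟨s, hs, rfl⟩
    exact ⟨s ∘ e, fun i => hs _, by rw [← e.sum_comp]; simp⟩

theorem OrthonormalBasis.isZonotope_box {ι : Type*} [Fintype ι]
    (b : OrthonormalBasis ι ℝ (EuclideanSpace ℝ (Fin n))) (lo hi : ι → ℝ)
    (hlo : ∀ i, lo i ≤ hi i) :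
    IsZonotope {x | ∀ i, ⟪b i, x⟫ ∈ Set.Icc (lo i) (hi i)} := by
  set c := fun i => (lo i + hi i) / 2
  set r := fun i => (hi i - lo i) / 2
  have hr : ∀ i, 0 ≤ r i := fun i => by simp only [r]; linarith [hlo i]
  have mem_Icc_iff : ∀ i t, t ∈ Set.Icc (lo i) (hi i) ↔ |t - c i| ≤ r i := fun i t => by
    simp only [c, r, Set.mem_Icc, abs_le]; constructor <;> intro h <;> constructor <;> linarith
  convert isZonotope_of_fintype (∑ i, c i • b i) (fun i => r i • b i) using 1
  ext x
  simp only [mem_Icc_iff, smul_smul, ← Finset.sum_add_distrib, ← add_smul]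
  constructor
  · intro hx
    refine ⟨fun i => (⟪b i, x⟫ - c i) / r i, fun i => ?_, ?_⟩
    · rw [abs_div, abs_of_nonneg (hr i)]
      exact div_le_one_of_le₀ (hx i) (hr i)
    · conv_lhs => rw [← b.sum_repr' x]
      refine Finset.sum_congr rfl fun i _ => ?_
      rw [div_mul_cancel_of_imp fun h => by simpa [h] using hx i, add_sub_cancel]
  · rintro ⟨s, hs, rfl⟩ i
    rw [b.orthonormal.inner_right_fintype, add_sub_cancel_left, abs_mul, abs_of_nonneg (hr i)]
    exact mul_le_of_le_one_left (hr i) (hs i)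

theorem Bornology.IsBounded.exists_isZonotope_superset_subset_halfSpace
    {X : Set (EuclideanSpace ℝ (Fin n))} (hX : Bornology.IsBounded X)
    {a : EuclideanSpace ℝ (Fin n)} (ha : a ≠ 0) {β : ℝ}
    (hXa : X ⊆ {x | ⟪a, x⟫ ≤ β}) :
    ∃ Z, IsZonotope Z ∧ X ⊆ Z ∧ Z ⊆ {x | ⟪a, x⟫ ≤ β} := by
  classical
  obtain ⟨R, hR⟩ := hX.subset_closedBall 0
  let u := ‖a‖⁻¹ • a
  have inner_le_iff : ∀ x, ⟪a, x⟫ ≤ β ↔ ⟪u, x⟫ ≤ β / ‖a‖ := fun x => by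
    rw [real_inner_smul_left, inv_mul_eq_div, div_le_div_iff_of_pos_right (norm_pos_iff.mpr ha)]
  have hu : Orthonormal ℝ ((↑) : ({u} : Set _) → EuclideanSpace ℝ (Fin n)) :=
    orthonormal_subsingleton_iff.mpr fun i => by
      rw [Set.mem_singleton_iff.mp i.2]; exact norm_smul_inv_norm ha
  obtain ⟨s, b, hus, hb⟩ := hu.exists_orthonormalBasis_extension
  let i₀ : s := ⟨u, hus rfl⟩
  have hbi₀ : b i₀ = u := by simp [hb, i₀]
  let upper : s → ℝ := fun i => if i = i₀ then β / ‖a‖ else R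
  -- The `min` keeps the box nonempty even when `R < 0`, i.e. when `X = ∅`.
  refine ⟨_, b.isZonotope_box (fun i => min (upper i) (-R)) upper fun _ => min_le_left _ _,
    ?_, ?_⟩
  · intro x hx i
    have hbx : |⟪b i, x⟫| ≤ R :=
      (abs_real_inner_le_norm _ _).trans (by simpa [b.norm_eq_one] using hR hx)
    rw [abs_le] at hbx
    refine ⟨min_le_of_right_le hbx.1, ?_⟩
    by_cases h : i = i₀
    · simpa [upper, h, hbi₀, ← inner_le_iff] using hXa hx
    · simpa [upper, h] using hbx.2
  · intro x hx
    simpa [upper, hbi₀, inner_le_iff] using (hx i₀).2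

end

theorem polytope_eq_iInter_zonotopes_general {n m : ℕ}
    (a : Fin m → EuclideanSpace ℝ (Fin n)) (b : Fin m → ℝ)
    (ha : ∀ i, a i ≠ 0)
    (X : Set (EuclideanSpace ℝ (Fin n)))
    (hX : X = ⋂ i : Fin m, {x : EuclideanSpace ℝ (Fin n) | ⟪a i, x⟫ ≤ b i})
    (hcomp : IsCompact X) :
    ∃ Z : Fin m → Set (EuclideanSpace ℝ (Fin n)),
      (∀ i, IsZonotope (Z i)) ∧ X = ⋂ i : Fin m, Z i := by
  have hXH : ∀ i, X ⊆ {x | ⟪a i, x⟫ ≤ b i} := fun i => hX ▸ Set.iInter_subset _ i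
  choose Z hZ hXZ hZH using fun i =>
    hcomp.isBounded.exists_isZonotope_superset_subset_halfSpace (ha i) (hXH i)
  exact ⟨Z, hZ, (Set.subset_iInter hXZ).antisymm (hX ▸ Set.iInter_mono hZH)⟩

/-- A nonempty compact convex polytope `X ⊆ ℝⁿ`, given as the
intersection of `m` closed half-spaces `{x : ⟪aᵢ, x⟫ ≤ bᵢ}` with `aᵢ ≠ 0`, can be
exactly represented as the intersection of at most `m` zonotopes. -/
theorem polytope_eq_iInter_zonotopes {n m : ℕ} (hm : 1 ≤ m)
    (a : Fin m → EuclideanSpace ℝ (Fin n)) (b : Fin m → ℝ)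
    (ha : ∀ i, a i ≠ 0)
    (X : Set (EuclideanSpace ℝ (Fin n)))
    (hX : X = ⋂ i : Fin m, {x : EuclideanSpace ℝ (Fin n) | ⟪a i, x⟫ ≤ b i})
    (hne : X.Nonempty) (hcomp : IsCompact X) :
    ∃ Z : Fin m → Set (EuclideanSpace ℝ (Fin n)),
      (∀ i, IsZonotope (Z i)) ∧ X = ⋂ i : Fin m, Z i :=
  polytope_eq_iInter_zonotopes_general a b ha X hX hcomp
end

section
/- Let f : ℝ^{n_x} × ℝ^{n_u} → ℝ^{n_x} and g : ℝ^{n_x} × ℝ^{n_u} → ℝ^{n_x × n_v} be maps, D ⊆ ℝ^{n_x} a set, H ≥ 1 an integer, and let (x_l)_{0 ≤ l ≤ H}, (u_l)_{0 ≤ l ≤ H−1}, (v_l)_{0 ≤ l ≤ H−1}, (d_l)_{0 ≤ l ≤ H−1} satisfy the dynamics x_{l+1} = f(x_l, u_l) + g(x_l, u_l) v_l + d_l with d_l ∈ D for all 0 ≤ l ≤ H−1. Suppose sets V̂_l ⊆ ℝ^{n_v} satisfy v_l ∈ V̂_l for each 0 ≤ l ≤ H−1, and sets X̂_l ⊆ ℝ^{n_x}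 satisfy x_0 ∈ X̂_0 and the over-approximation property X̂_{l+1} ⊇ {f(x, u_l) + g(x, u_l) v + d : x ∈ X̂_l, v ∈ V̂_l, d ∈ D} for all 0 ≤ l ≤ H−2. Then x_l ∈ X̂_l for all 0 ≤ l ≤ H−1, and consequently the parameter v_{H−1} used at the last step belongs to the approximated information set L̂ = {v ∈ ℝ^{n_v} : ∃ x ∈ X̂_{H−1}, x_H − f(x, u_{H−1}) − g(x, u_{H−1}) v ∈ D}. -/
/-! The true state is propagated by the same one-step map whose image the sets `X̂_l`
over-approximate, so `x_l ∈ X̂_l` follows by induction on `l`. At the last step the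
disturbance `d_{H-1} = x_H - f(x_{H-1}, u_{H-1}) - g(x_{H-1}, u_{H-1}) v_{H-1}` lies in `D`,
so `x_{H-1} ∈ X̂_{H-1}` witnesses `v_{H-1} ∈ L̂`. -/

theorem forall_lt_mem_of_succ_mem {α : Type*} {x : ℕ → α} {X : ℕ → Set α} {H : ℕ}
    (h0 : x 0 ∈ X 0) (hsucc : ∀ l, l + 1 < H → x l ∈ X l → x (l + 1) ∈ X (l + 1)) :
    ∀ l < H, x l ∈ X l := by
  intro l
  induction l with
  | zero => exact fun _ => h0
  | succ l ih => exact fun hl => hsucc l hl (ih (by omega))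

section ControlAffine

variable {R U m n : Type*} [Ring R] [Fintype n]
  (f : (m → R) → U → (m → R)) (g : (m → R) → U → Matrix m n R) (D : Set (m → R))

/-- The one-step image over-approximated by `X̂_{l+1}` in the set recursion (9). -/
def oneStepReachableSet (u : U) (X : Set (m → R)) (V : Set (n → R)) : Set (m → R) :=
  {z | ∃ xx ∈ X, ∃ vv ∈ V, ∃ dd ∈ D, z = f xx u + (g xx u).mulVec vv + dd}

/-- The approximated information set `L̂` of (11), for the measured next state `y`. -/
def informationSet (u : U) (X : Set (m → R)) (y : m → R) : Set (n → R) :=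
  {w | ∃ xx ∈ X, y - f xx u - (g xx u).mulVec w ∈ D}

variable {f g D}

theorem mem_oneStepReachableSet {u : U} {X : Set (m → R)} {V : Set (n → R)}
    {x y : m → R} {w : n → R} {d : m → R} (hx : x ∈ X) (hw : w ∈ V) (hd : d ∈ D)
    (hy : y = f x u + (g x u).mulVec w + d) :
    y ∈ oneStepReachableSet f g D u X V :=
  ⟨x, hx, w, hw, d, hd, hy⟩

theorem mem_informationSet {u : U} {X : Set (m → R)} {x y : m → R} {w : n → R} {d : m → R}
    (hx : x ∈ X) (hd : d ∈ D) (hy : y = f x u + (g x u).mulVec w + d) :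
    w ∈ informationSet f g D u X y :=
  ⟨x, hx, by convert hd using 1; rw [hy]; abel⟩

end ControlAffine

/-- Soundness of the reachable-set over-approximation under the
self-triggering mechanism: if the trajectory satisfies
`x_{l+1} = f(x_l,u_l) + g(x_l,u_l) v_l + d_l` with `d_l ∈ D` and `v_l ∈ V̂_l` for
`0 ≤ l ≤ H−1`, `x_0 ∈ X̂_0`, and the sets `X̂_l` satisfy the over-approximation
property `X̂_{l+1} ⊇ {f(x,u_l) + g(x,u_l) v + d : x ∈ X̂_l, v ∈ V̂_l, d ∈ D}` for
`0 ≤ l ≤ H−2`, then `x_l ∈ X̂_l` for all `0 ≤ l ≤ H−1`, and the true parameter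
`v_{H−1}` belongs to the approximated information set
`L̂ = {v : ∃ x ∈ X̂_{H−1}, x_H − f(x,u_{H−1}) − g(x,u_{H−1}) v ∈ D}`. -/
theorem reachable_set_estimation_sound {nx nu nv : ℕ}
    (f : (Fin nx → ℝ) → (Fin nu → ℝ) → (Fin nx → ℝ))
    (g : (Fin nx → ℝ) → (Fin nu → ℝ) → Matrix (Fin nx) (Fin nv) ℝ)
    (D : Set (Fin nx → ℝ)) (H : ℕ) (hH : 1 ≤ H)
    (x : ℕ → Fin nx → ℝ) (u : ℕ → Fin nu → ℝ)
    (v : ℕ → Fin nv → ℝ) (d : ℕ → Fin nx → ℝ)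
    (hd : ∀ l < H, d l ∈ D)
    (hdyn : ∀ l < H, x (l + 1) = f (x l) (u l) + (g (x l) (u l)).mulVec (v l) + d l)
    (Vhat : ℕ → Set (Fin nv → ℝ))
    (hV : ∀ l < H, v l ∈ Vhat l)
    (Xhat : ℕ → Set (Fin nx → ℝ))
    (hX0 : x 0 ∈ Xhat 0)
    (hXrec : ∀ l, l + 2 ≤ H →
      {z | ∃ xx ∈ Xhat l, ∃ vv ∈ Vhat l, ∃ dd ∈ D,
        z = f xx (u l) + (g xx (u l)).mulVec vv + dd} ⊆ Xhat (l + 1)) :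
    (∀ l < H, x l ∈ Xhat l) ∧
    v (H - 1) ∈ {w | ∃ xx ∈ Xhat (H - 1),
      x H - f xx (u (H - 1)) - (g xx (u (H - 1))).mulVec w ∈ D} := by
  have hX : ∀ l < H, x l ∈ Xhat l := forall_lt_mem_of_succ_mem hX0 fun l hl hxl =>
    hXrec l hl (mem_oneStepReachableSet hxl (hV l (by omega)) (hd l (by omega))
      (hdyn l (by omega)))
  refine ⟨hX, ?_⟩
  have hlast : x H = f (x (H - 1)) (u (H - 1)) + (g (x (H - 1)) (u (H - 1))).mulVec (v (H - 1))
      + d (H - 1) := by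
    simpa only [Nat.sub_add_cancel hH] using hdyn (H - 1) (by omega)
  exact mem_informationSet (hX (H - 1) (by omega)) (hd (H - 1) (by omega)) hlast
end
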